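/- arXiv:1606.08988 — 6 statements merged into one kernel-verified Lean document; each statement's English description precedes it below -/
import Mathlib

section
/- For every k ≥ 0 one has √(A_{k+1}) ≥ (1/2) ∑_{i=0}^{k} 1/√(L_{i+1}). In particular, if in addition L_i ≤ 2 L_f for all i ≥ 1 and some L_f > 0, then A_{k+1} ≥ (k+1)²/(8 L_f). -/
/-!
Writing `a = A k` and `l = L (k+1)`, the recursion gives
`√(A (k+1)) = α (k+1) √l = √(a + 1/(4l)) + 1/(2√l) ≥ √a + 1/(2√l)`,
so `√A` grows by at least `1/(2√(L (k+1)))` per step; telescoping from `A 0 = 0` gives the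
first bound, and `L i ≤ 2 L_f` turns each increment into at least `1/(2√(2 L_f))`.
-/

open Finset Real

lemma sqrt_add_inv_two_sqrt_le {a l : ℝ} (ha : 0 ≤ a) (hl : 0 < l) :
    √a + 1 / (2 * √l) ≤ √((√(a / l + 1 / (4 * l ^ 2)) + 1 / (2 * l)) ^ 2 * l) := by
  rw [sqrt_mul (sq_nonneg _), sqrt_sq (by positivity), add_mul]
  gcongr ?_ + ?_
  · calc √a = √(a / l) * √l := by rw [← sqrt_mul (div_nonneg ha hl.le), div_mul_cancel₀ a hl.ne']
      _ ≤ √(a / l + 1 / (4 * l ^ 2)) * √l := by gcongr; exact le_add_of_nonneg_right (by positivity)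
  · refine le_of_eq ?_
    field_simp
    exact (sq_sqrt hl.le).symm

lemma half_sum_inv_sqrt_le_sqrt (L : ℕ → ℝ) (hL : ∀ k, 0 < L k) (α : ℕ → ℝ) (hα0 : α 0 = 0)
    (hαrec : ∀ k, α (k + 1) =
      √((α k) ^ 2 * L k / L (k + 1) + 1 / (4 * (L (k + 1)) ^ 2)) + 1 / (2 * L (k + 1)))
    (n : ℕ) :
    (1 / 2) * ∑ i ∈ range n, 1 / √(L (i + 1)) ≤ √(α n ^ 2 * L n) := by
  have hstep (i : ℕ) : 1 / (2 * √(L (i + 1))) ≤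
      √(α (i + 1) ^ 2 * L (i + 1)) - √(α i ^ 2 * L i) := by
    rw [hαrec i, le_sub_iff_add_le']
    exact sqrt_add_inv_two_sqrt_le (mul_nonneg (sq_nonneg _) (hL i).le) (hL (i + 1))
  calc (1 / 2) * ∑ i ∈ range n, 1 / √(L (i + 1))
      = ∑ i ∈ range n, 1 / (2 * √(L (i + 1))) := by rw [mul_sum]; simp only [one_div, mul_inv]
    _ ≤ ∑ i ∈ range n, (√(α (i + 1) ^ 2 * L (i + 1)) - √(α i ^ 2 * L i)) :=
        sum_le_sum fun i _ => hstep i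
    _ = √(α n ^ 2 * L n) := by rw [sum_range_sub (fun i => √(α i ^ 2 * L i)), hα0]; simp

lemma card_div_sqrt_le_sum_inv_sqrt {L : ℕ → ℝ} (hL : ∀ k, 0 < L k) {M : ℝ}
    (hLM : ∀ i, 1 ≤ i → L i ≤ M) (n : ℕ) :
    n / √M ≤ ∑ i ∈ range n, 1 / √(L (i + 1)) := by
  have hle : ∀ i ∈ range n, 1 / √M ≤ 1 / √(L (i + 1)) := fun i _ =>
    one_div_le_one_div_of_le (sqrt_pos.mpr (hL _)) (sqrt_le_sqrt (hLM _ (Nat.le_add_left 1 i)))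
  simpa [div_eq_mul_one_div (n : ℝ)] using sum_le_sum hle

/-- For the adaptive accelerated gradient method coefficients `α`, defined from a
positive sequence `L` by `α 0 = 0` and
`α (k+1) = √(α k ^ 2 * L k / L (k+1) + 1 / (4 * L (k+1) ^ 2)) + 1 / (2 * L (k+1))`,
and `A k := α k ^ 2 * L k`, for every `k ≥ 0` one has
`√(A (k+1)) ≥ (1/2) ∑_{i=0}^{k} 1 / √(L (i+1))`.  In particular, if in addition
`L i ≤ 2 L_f` for all `i ≥ 1` and some `L_f > 0`, then `A (k+1) ≥ (k+1)² / (8 L_f)`. -/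
theorem stmt4 (L : ℕ → ℝ) (hL : ∀ k, 0 < L k)
    (α : ℕ → ℝ) (hα0 : α 0 = 0)
    (hαrec : ∀ k, α (k + 1) =
      Real.sqrt ((α k) ^ 2 * L k / L (k + 1) + 1 / (4 * (L (k + 1)) ^ 2))
        + 1 / (2 * L (k + 1)))
    (A : ℕ → ℝ) (hA : ∀ k, A k = (α k) ^ 2 * L k) (k : ℕ) :
    (1 / 2) * ∑ i ∈ Finset.range (k + 1), 1 / Real.sqrt (L (i + 1))
      ≤ Real.sqrt (A (k + 1)) ∧
    ∀ Lf : ℝ, 0 < Lf → (∀ i, 1 ≤ i → L i ≤ 2 * Lf) →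
      ((k : ℝ) + 1) ^ 2 / (8 * Lf) ≤ A (k + 1) := by
  have hsum := half_sum_inv_sqrt_le_sqrt L hL α hα0 hαrec (k + 1)
  rw [← hA] at hsum
  refine ⟨hsum, fun Lf hLf hLb => ?_⟩
  have hcard := card_div_sqrt_le_sum_inv_sqrt hL hLb (k + 1)
  push_cast at hcard
  have hsqrt : ((k : ℝ) + 1) / (2 * √(2 * Lf)) ≤ √(A (k + 1)) := by
    calc ((k : ℝ) + 1) / (2 * √(2 * Lf)) = 1 / 2 * ((k + 1) / √(2 * Lf)) := by ring
      _ ≤ √(A (k + 1)) := by linarith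
  have hA_nonneg : 0 ≤ A (k + 1) := by rw [hA]; exact mul_nonneg (sq_nonneg _) (hL _).le
  rw [le_sqrt (by positivity) hA_nonneg, div_pow, mul_pow, sq_sqrt (by positivity)] at hsqrt
  convert hsqrt using 2; ring
end

section
/- Under the per-step conditions listed in the context, for every u ∈ Q: α⟨∇f(x₊), z − u⟩ ≤ α²L(φ(x₊) − φ(y₊)) + (V_z(u) − V_{z₊}(u)) + αΨ(u) − α²L·Ψ(x₊) + (α²L − α)·Ψ(y). -/
open RealInnerProductSpace

/-!
The gradient step, compared with the point `τ z₊ + (1 - τ) y`, whose distance to `x₊` is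
`τ ‖z₊ - z‖`, bounds `α²L φ(y₊)` by `α²L f(x₊) + α ⟪∇f(x₊), z₊ - z⟫ + ½ ‖z₊ - z‖²` plus
`Ψ`-terms, since `α²L τ = α`. The first-order optimality condition of the mirror step, rewritten
with the three-point identity of Bregman divergences, bounds `α ⟪∇f(x₊), z₊ - u⟫` by
`V_z(u) - V_{z₊}(u) - V_z(z₊)`, and `V_z(z₊) ≥ ½ ‖z₊ - z‖²` by strong convexity of `ω`, which
absorbs the quadratic term of the gradient step.
-/

theorem IsMinOn.hasFDerivAt_nonneg_of_add_convexOn {E : Type*} [NormedAddCommGroup E]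
    [NormedSpace ℝ E] {s : Set E} {h ψ : E → ℝ} {h' : E →L[ℝ] ℝ} {x u : E}
    (hmin : IsMinOn (h + ψ) s x) (hh : HasFDerivAt h h' x) (hψ : ConvexOn ℝ s ψ)
    (hx : x ∈ s) (hu : u ∈ s) : 0 ≤ h' (u - x) + (ψ u - ψ x) := by
  -- on the segment from `x` to `u`, replace `ψ` by its chord, which lies above it
  set k : ℝ → ℝ := fun t => h (x + t • (u - x)) + ((1 - t) * ψ x + t * ψ u)
  have hk_min : IsMinOn k (Set.Icc 0 1) 0 := by
    refine isMinOn_iff.2 fun t ⟨ht0, ht1⟩ => ?_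
    have hseg : x + t • (u - x) = (1 - t) • x + t • u := by module
    have hmem : x + t • (u - x) ∈ s := by
      rw [hseg]; exact hψ.1 hx hu (by linarith) ht0 (by ring)
    have hchord : ψ (x + t • (u - x)) ≤ (1 - t) * ψ x + t * ψ u := by
      rw [hseg]; exact hψ.2 hx hu (by linarith) ht0 (by ring)
    have hle := isMinOn_iff.1 hmin _ hmem
    simp only [Pi.add_apply] at hle
    simp only [k, zero_smul, add_zero, sub_zero, one_mul, zero_mul]
    linarith
  have hk_deriv : HasDerivAt k (h' (u - x) + (ψ u - ψ x)) 0 := by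
    have hline : HasDerivAt (fun t : ℝ => x + t • (u - x)) (u - x) 0 := by
      simpa using ((hasDerivAt_id (0 : ℝ)).smul_const (u - x)).const_add x
    exact ((hh.comp_hasDerivAt_of_eq 0 hline (by simp)).add
      (((hasDerivAt_id (0 : ℝ)).const_sub 1).mul_const (ψ x) |>.add
        ((hasDerivAt_id (0 : ℝ)).mul_const (ψ u)))).congr_deriv (by ring)
  simpa using hk_min.localize.hasFDerivWithinAt_nonneg hk_deriv.hasFDerivAt.hasFDerivWithinAt
    (y := 1) (mem_posTangentConeAt_of_segment_subset (by simp [segment_eq_Icc]))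

section Bregman
variable {H : Type*} [NormedAddCommGroup H] [InnerProductSpace ℝ H]

def bregmanDiv (ω : H → ℝ) (ωgrad : H → H) (a b : H) : ℝ := ω b - ω a - ⟪ωgrad a, b - a⟫

theorem bregmanDiv_three_point (ω : H → ℝ) (ωgrad : H → H) (a b u : H) :
    ⟪ωgrad b - ωgrad a, u - b⟫ =
      bregmanDiv ω ωgrad a u - bregmanDiv ω ωgrad b u - bregmanDiv ω ωgrad a b := by
  simp only [bregmanDiv, inner_sub_left, inner_sub_right]
  ring

theorem hasFDerivAt_bregmanDiv [CompleteSpace H] {ω : H → ℝ} {ωgrad : H → H} {a b : H}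
    (hω : HasGradientAt ω (ωgrad b) b) :
    HasFDerivAt (bregmanDiv ω ωgrad a) (innerSL ℝ (ωgrad b - ωgrad a)) b := by
  have := (hω.hasFDerivAt.sub_const (ω a)).sub
    ((innerSL ℝ (ωgrad a)).hasFDerivAt.comp b ((hasFDerivAt_id b).sub_const a))
  refine this.congr_fderiv ?_
  ext v
  simp

theorem inner_sub_le_bregmanDiv_of_isMinOn [CompleteSpace H] {Q : Set H} {Ψ ω : H → ℝ}
    {ωgrad : H → H} {g z zp u : H} {α : ℝ} (hα : 0 < α) (hω : HasGradientAt ω (ωgrad zp) zp)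
    (hΨ : ConvexOn ℝ Q Ψ)
    (hmin : IsMinOn (fun v => ⟪g, v - z⟫ + (1 / α) * bregmanDiv ω ωgrad z v + Ψ v) Q zp)
    (hzp : zp ∈ Q) (hu : u ∈ Q) :
    α * ⟪g, zp - u⟫ ≤ bregmanDiv ω ωgrad z u - bregmanDiv ω ωgrad zp u
      - bregmanDiv ω ωgrad z zp + α * (Ψ u - Ψ zp) := by
  have hderiv : HasFDerivAt (fun v => ⟪g, v - z⟫ + (1 / α) * bregmanDiv ω ωgrad z v)
      (innerSL ℝ g + (1 / α) • innerSL ℝ (ωgrad zp - ωgrad z)) zp :=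
    ((innerSL ℝ g).hasFDerivAt.comp zp ((hasFDerivAt_id zp).sub_const z)).add
      ((hasFDerivAt_bregmanDiv hω).const_mul (1 / α))
  have hopt := hmin.hasFDerivAt_nonneg_of_add_convexOn (ψ := Ψ) hderiv hΨ hzp hu
  simp only [add_apply, smul_apply, innerSL_apply_apply, smul_eq_mul] at hopt
  have hscaled := mul_le_mul_of_nonneg_left hopt hα.le
  field_simp at hscaled
  rw [← bregmanDiv_three_point, ← neg_sub u zp, inner_neg_right]
  linarith

end Bregman

theorem gradient_step_le_convex_comb {H : Type*} [NormedAddCommGroup H] [InnerProductSpace ℝ H]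
    {Q : Set H} {f Ψ : H → ℝ} (hΨ : ConvexOn ℝ Q Ψ) {L τ : ℝ} (hτ0 : 0 ≤ τ) (hτ1 : τ ≤ 1)
    {g y z zp xp yp : H} (hy : y ∈ Q) (hzp : zp ∈ Q) (hxp : xp = τ • z + (1 - τ) • y)
    (hmin : IsMinOn (fun v => ⟪g, v - xp⟫ + (L / 2) * ‖v - xp‖ ^ 2 + Ψ v) Q yp)
    (hdescent : f yp ≤ f xp + ⟪g, yp - xp⟫ + (L / 2) * ‖yp - xp‖ ^ 2) :
    f yp + Ψ yp ≤ f xp + τ * ⟪g, zp - z⟫ + L / 2 * τ ^ 2 * ‖zp - z‖ ^ 2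
      + τ * Ψ zp + (1 - τ) * Ψ y := by
  have hwQ : τ • zp + (1 - τ) • y ∈ Q := hΨ.1 hzp hy hτ0 (by linarith) (by ring)
  have hΨw : Ψ (τ • zp + (1 - τ) • y) ≤ τ * Ψ zp + (1 - τ) * Ψ y :=
    hΨ.2 hzp hy hτ0 (by linarith) (by ring)
  have hle := isMinOn_iff.1 hmin _ hwQ
  rw [show τ • zp + (1 - τ) • y - xp = τ • (zp - z) by rw [hxp]; module, inner_smul_right,
    norm_smul, Real.norm_of_nonneg hτ0, mul_pow] at hle
  linarith

theorem stmt5_general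
    {H : Type*} [NormedAddCommGroup H] [InnerProductSpace ℝ H] [CompleteSpace H]
    (Q : Set H)
    (f Ψ ω : H → ℝ) (fgrad ωgrad : H → H)
    (hω : ∀ x, HasGradientAt ω (ωgrad x) x)
    (hΨconv : ConvexOn ℝ Q Ψ)
    (hωstrong : ∀ a ∈ Q, ∀ b ∈ Q,
      ω a + ⟪ωgrad a, b - a⟫ + (1 / 2) * ‖b - a‖ ^ 2 ≤ ω b)
    (V : H → H → ℝ)
    (hV : ∀ a b, V a b = ω b - ω a - ⟪ωgrad a, b - a⟫)
    (φ : H → ℝ) (hφ : ∀ v, φ v = f v + Ψ v)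
    (α L : ℝ) (hα : 0 < α) (hL : 0 < L) (hαL : 1 ≤ α * L)
    (τ : ℝ) (hτ : τ = 1 / (α * L))
    (y z : H) (hy : y ∈ Q) (hz : z ∈ Q)
    (xp : H) (hxp : xp = τ • z + (1 - τ) • y)
    (yp : H)
    (hypmin : ∀ v ∈ Q,
      ⟪fgrad xp, yp - xp⟫ + (L / 2) * ‖yp - xp‖ ^ 2 + Ψ yp ≤
        ⟪fgrad xp, v - xp⟫ + (L / 2) * ‖v - xp‖ ^ 2 + Ψ v)
    (zp : H) (hzpQ : zp ∈ Q)
    (hzpmin : ∀ v ∈ Q,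
      ⟪fgrad xp, zp - z⟫ + (1 / α) * V z zp + Ψ zp ≤
        ⟪fgrad xp, v - z⟫ + (1 / α) * V z v + Ψ v)
    (hdescent : f yp ≤ f xp + ⟪fgrad xp, yp - xp⟫ + (L / 2) * ‖yp - xp‖ ^ 2)
    (u : H) (hu : u ∈ Q) :
    α * ⟪fgrad xp, z - u⟫ ≤
      α ^ 2 * L * (φ xp - φ yp) + (V z u - V zp u) + α * Ψ u
        - α ^ 2 * L * Ψ xp + (α ^ 2 * L - α) * Ψ y := by
  obtain rfl : V = bregmanDiv ω ωgrad := funext₂ hV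
  obtain rfl : φ = fun v => f v + Ψ v := funext hφ
  have hτ0 : 0 ≤ τ := by rw [hτ]; positivity
  have hτ1 : τ ≤ 1 := by rw [hτ, div_le_one (by positivity)]; exact hαL
  have hstep := gradient_step_le_convex_comb hΨconv hτ0 hτ1 hy hzpQ hxp
    (isMinOn_iff.2 hypmin) hdescent
  have hstep_scaled : α ^ 2 * L * (f yp + Ψ yp) ≤ α ^ 2 * L * f xp + α * ⟪fgrad xp, zp - z⟫
      + 1 / 2 * ‖zp - z‖ ^ 2 + α * Ψ zp + (α ^ 2 * L - α) * Ψ y := by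
    have hmul := mul_le_mul_of_nonneg_left hstep (by positivity : 0 ≤ α ^ 2 * L)
    rw [hτ] at hmul
    field_simp at hmul ⊢
    linarith
  have hmirror := inner_sub_le_bregmanDiv_of_isMinOn hα (hω zp) hΨconv
    (isMinOn_iff.2 hzpmin) hzpQ hu
  have hstrong : 1 / 2 * ‖zp - z‖ ^ 2 ≤ bregmanDiv ω ωgrad z zp := by
    have hωzzp := hωstrong z hz zp hzpQ
    unfold bregmanDiv
    linarith
  have hsplit : ⟪fgrad xp, z - u⟫ = ⟪fgrad xp, zp - u⟫ - ⟪fgrad xp, zp - z⟫ := by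
    rw [← inner_sub_right, sub_sub_sub_cancel_left]
  rw [hsplit]
  linarith

/-- One step of the accelerated composite gradient method (Lemma 1 of the paper):
under the per-step conditions, for every `u ∈ Q`,
`α⟨∇f(x₊), z − u⟩ ≤ α²L(φ(x₊) − φ(y₊)) + (V_z(u) − V_{z₊}(u)) + αΨ(u) − α²L·Ψ(x₊)
  + (α²L − α)·Ψ(y)`. -/
theorem stmt5
    {H : Type*} [NormedAddCommGroup H] [InnerProductSpace ℝ H] [CompleteSpace H]
    (Q : Set H) (hQne : Q.Nonempty) (hQclosed : IsClosed Q) (hQconv : Convex ℝ Q)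
    (f Ψ ω : H → ℝ) (fgrad ωgrad : H → H)
    (hf : ∀ x, HasGradientAt f (fgrad x) x)
    (hω : ∀ x, HasGradientAt ω (ωgrad x) x)
    (hfconv : ConvexOn ℝ Q f) (hΨconv : ConvexOn ℝ Q Ψ)
    (hωstrong : ∀ a ∈ Q, ∀ b ∈ Q,
      ω a + ⟪ωgrad a, b - a⟫ + (1 / 2) * ‖b - a‖ ^ 2 ≤ ω b)
    (V : H → H → ℝ)
    (hV : ∀ a b, V a b = ω b - ω a - ⟪ωgrad a, b - a⟫)
    (φ : H → ℝ) (hφ : ∀ v, φ v = f v + Ψ v)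
    (α L : ℝ) (hα : 0 < α) (hL : 0 < L) (hαL : 1 ≤ α * L)
    (τ : ℝ) (hτ : τ = 1 / (α * L))
    (y z : H) (hy : y ∈ Q) (hz : z ∈ Q)
    (xp : H) (hxp : xp = τ • z + (1 - τ) • y)
    (yp : H) (hypQ : yp ∈ Q)
    (hypmin : ∀ v ∈ Q,
      ⟪fgrad xp, yp - xp⟫ + (L / 2) * ‖yp - xp‖ ^ 2 + Ψ yp ≤
        ⟪fgrad xp, v - xp⟫ + (L / 2) * ‖v - xp‖ ^ 2 + Ψ v)
    (zp : H) (hzpQ : zp ∈ Q)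
    (hzpmin : ∀ v ∈ Q,
      ⟪fgrad xp, zp - z⟫ + (1 / α) * V z zp + Ψ zp ≤
        ⟪fgrad xp, v - z⟫ + (1 / α) * V z v + Ψ v)
    (hdescent : f yp ≤ f xp + ⟪fgrad xp, yp - xp⟫ + (L / 2) * ‖yp - xp‖ ^ 2)
    (u : H) (hu : u ∈ Q) :
    α * ⟪fgrad xp, z - u⟫ ≤
      α ^ 2 * L * (φ xp - φ yp) + (V z u - V zp u) + α * Ψ u
        - α ^ 2 * L * Ψ xp + (α ^ 2 * L - α) * Ψ y :=
  stmt5_general Q f Ψ ω fgrad ωgrad hω hΨconv hωstrong V hV φ hφ α L hα hL hαL τ hτ y z hy hz xp hxp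
    yp hypmin zp hzpQ hzpmin hdescent u hu
end

section
/- Under the per-step conditions listed in the context, for every u ∈ Q: α²L·φ(y₊) − (α²L − α)·φ(y) ≤ α·( f(x₊) + ⟨∇f(x₊), u − x₊⟩ + Ψ(u) ) + (V_z(u) − V_{z₊}(u)). -/
/-!
The gradient step `yp` is compared with the point `τ • zp + (1 - τ) • y`, whose distance to `xp`
is `τ ‖zp - z‖`. Since `L τ ^ 2 = τ / α`, strong convexity of `ω` absorbs the resulting quadratic
term into `V z zp`; the three-point property of the mirror step `zp` trades `V z zp` for
`V z u - V zp u`; and convexity of `f` at `xp`, with `y - xp = τ • (y - z)`, absorbs the leftover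
linear term. Multiplying by `α ^ 2 * L = α / τ` gives the claim.
-/

open RealInnerProductSpace Set InnerProductSpace

section FirstOrder

variable {E : Type*} [NormedAddCommGroup E] [NormedSpace ℝ E]

theorem HasFDerivAt.le_apply_of_forall_mul_le {h : E → ℝ} {h' : E →L[ℝ] ℝ} {p w : E} {c : ℝ}
    (hh : HasFDerivAt h h' p) (hc : ∀ t ∈ Ioo (0 : ℝ) 1, t * c ≤ h (p + t • w) - h p) :
    c ≤ h' w := by
  refine ge_of_tendsto (hh.hasLineDerivAt w).tendsto_slope_zero_right ?_
  filter_upwards [Ioo_mem_nhdsGT (zero_lt_one' ℝ)] with t ht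
  rw [smul_eq_mul, le_inv_mul_iff₀ ht.1]
  exact hc t ht

theorem ConvexOn.apply_add_smul_sub_le {s : Set E} {f : E → ℝ} {x y : E} {t : ℝ}
    (hf : ConvexOn ℝ s f) (hx : x ∈ s) (hy : y ∈ s) (ht : t ∈ Icc (0 : ℝ) 1) :
    f (x + t • (y - x)) ≤ f x + t * (f y - f x) := by
  have hseg : x + t • (y - x) = (1 - t) • x + t • y := by module
  have := hf.2 hx hy (sub_nonneg.2 ht.2) ht.1 (sub_add_cancel 1 t)
  rw [hseg]
  simp only [smul_eq_mul] at this
  linarith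

theorem ConvexOn.add_fderiv_sub_le {s : Set E} {f : E → ℝ} {f' : E →L[ℝ] ℝ} {x y : E}
    (hf : ConvexOn ℝ s f) (hx : x ∈ s) (hy : y ∈ s) (hf' : HasFDerivAt f f' x) :
    f x + f' (y - x) ≤ f y := by
  have := hf'.neg.le_apply_of_forall_mul_le (w := y - x) (c := f x - f y) fun t ht => by
    have := hf.apply_add_smul_sub_le hx hy (Ioo_subset_Icc_self ht)
    simp only [Pi.neg_apply]
    linarith
  simp only [neg_apply] at this
  linarith

theorem IsMinOn.le_add_fderiv_sub {s : Set E} {F Ψ : E → ℝ} {F' : E →L[ℝ] ℝ} {p u : E}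
    (hmin : IsMinOn (F + Ψ) s p) (hΨ : ConvexOn ℝ s Ψ) (hp : p ∈ s) (hu : u ∈ s)
    (hF : HasFDerivAt F F' p) : Ψ p ≤ Ψ u + F' (u - p) := by
  have := hF.le_apply_of_forall_mul_le (w := u - p) (c := Ψ p - Ψ u) fun t ht => by
    have hΨv := hΨ.apply_add_smul_sub_le hp hu (Ioo_subset_Icc_self ht)
    have := isMinOn_iff.1 hmin _ (hΨ.1.add_smul_sub_mem hp hu (Ioo_subset_Icc_self ht))
    simp only [Pi.add_apply] at this
    linarith
  linarith

end FirstOrder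

section Bregman

variable {H : Type*} [NormedAddCommGroup H] [InnerProductSpace ℝ H]
  {ω : H → ℝ} {ωgrad : H → H} {V : H → H → ℝ}

theorem bregman_three_point (hV : ∀ a b, V a b = ω b - ω a - ⟪ωgrad a, b - a⟫) (z p u : H) :
    V z u - V z p - V p u = ⟪ωgrad p - ωgrad z, u - p⟫ := by
  have hsplit : u - z = (p - z) + (u - p) := by abel
  rw [hV, hV, hV, hsplit, inner_add_right, inner_sub_left]
  ring

theorem hasFDerivAt_inner_sub_const [CompleteSpace H] (g z p : H) :
    HasFDerivAt (fun v => ⟪g, v - z⟫) (toDual ℝ H g) p :=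
  (toDual ℝ H g).hasFDerivAt.comp p ((hasFDerivAt_id p).sub_const z)

theorem hasFDerivAt_bregman [CompleteSpace H]
    (hV : ∀ a b, V a b = ω b - ω a - ⟪ωgrad a, b - a⟫) {p : H}
    (hω : HasGradientAt ω (ωgrad p) p) (z : H) :
    HasFDerivAt (V z) (toDual ℝ H (ωgrad p - ωgrad z)) p := by
  rw [show V z = fun v => ω v - ω z - ⟪ωgrad z, v - z⟫ from funext (hV z), map_sub]
  exact (hω.hasFDerivAt.sub_const _).sub (hasFDerivAt_inner_sub_const _ _ _)

theorem IsMinOn.add_bregman_le [CompleteSpace H]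
    (hV : ∀ a b, V a b = ω b - ω a - ⟪ωgrad a, b - a⟫) {Q : Set H} {Ψ : H → ℝ} {g z p u : H}
    {α : ℝ} (hmin : IsMinOn (fun v => ⟪g, v - z⟫ + (1 / α) * V z v + Ψ v) Q p)
    (hΨ : ConvexOn ℝ Q Ψ) (hp : p ∈ Q) (hu : u ∈ Q) (hω : HasGradientAt ω (ωgrad p) p) :
    ⟪g, p - z⟫ + (1 / α) * V z p + Ψ p + (1 / α) * V p u ≤ ⟪g, u - z⟫ + (1 / α) * V z u + Ψ u := by
  have hF := (hasFDerivAt_inner_sub_const g z p).add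
    ((hasFDerivAt_bregman hV hω z).const_mul (1 / α))
  have hopt := hmin.le_add_fderiv_sub hΨ hp hu hF
  simp only [add_apply, smul_apply, toDual_apply_apply, smul_eq_mul,
    ← bregman_three_point hV z p u] at hopt
  have hsplit : ⟪g, u - z⟫ = ⟪g, p - z⟫ + ⟪g, u - p⟫ := by
    rw [← inner_add_right, sub_add_sub_cancel']
  rw [hsplit]
  linarith

end Bregman

section LinearCoupling

variable {H : Type*} [NormedAddCommGroup H] [InnerProductSpace ℝ H]
  {Q : Set H} {f Ψ : H → ℝ} {g x y z yp zp u : H} {α L τ : ℝ}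

theorem prox_step_le_of_convex_comb (hΨ : ConvexOn ℝ Q Ψ)
    (hmin : IsMinOn (fun v => ⟪g, v - x⟫ + L / 2 * ‖v - x‖ ^ 2 + Ψ v) Q yp)
    (hdescent : f yp ≤ f x + ⟪g, yp - x⟫ + L / 2 * ‖yp - x‖ ^ 2)
    (hzp : zp ∈ Q) (hy : y ∈ Q) (hτ0 : 0 ≤ τ) (hτ1 : τ ≤ 1) (hx : x = τ • z + (1 - τ) • y) :
    f yp + Ψ yp ≤
      f x + τ * ⟪g, zp - z⟫ + L / 2 * τ ^ 2 * ‖zp - z‖ ^ 2 + (τ * Ψ zp + (1 - τ) * Ψ y) := by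
  have hw_sub : τ • zp + (1 - τ) • y - x = τ • (zp - z) := by rw [hx]; module
  have hwQ := hΨ.1 hzp hy hτ0 (sub_nonneg.2 hτ1) (add_sub_cancel τ 1)
  have hΨw := hΨ.2 hzp hy hτ0 (sub_nonneg.2 hτ1) (add_sub_cancel τ 1)
  have hyp := isMinOn_iff.1 hmin _ hwQ
  simp only [hw_sub, real_inner_smul_right, norm_smul, Real.norm_of_nonneg hτ0, smul_eq_mul]
    at hyp hΨw
  linarith

theorem linear_coupling_step_le [CompleteSpace H] {ω : H → ℝ} {ωgrad : H → H} {V : H → H → ℝ}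
    (hQ : Convex ℝ Q) (hf : ConvexOn ℝ Q f) (hg : HasGradientAt f g x) (hΨ : ConvexOn ℝ Q Ψ)
    (hV : ∀ a b, V a b = ω b - ω a - ⟪ωgrad a, b - a⟫) (hω : HasGradientAt ω (ωgrad zp) zp)
    (hα : 0 < α) (hαLτ : α * L * τ = 1) (hτ0 : 0 ≤ τ) (hτ1 : τ ≤ 1)
    (hy : y ∈ Q) (hz : z ∈ Q) (hx : x = τ • z + (1 - τ) • y)
    (hmin_y : IsMinOn (fun v => ⟪g, v - x⟫ + L / 2 * ‖v - x‖ ^ 2 + Ψ v) Q yp)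
    (hdescent : f yp ≤ f x + ⟪g, yp - x⟫ + L / 2 * ‖yp - x‖ ^ 2)
    (hzp : zp ∈ Q) (hmin_z : IsMinOn (fun v => ⟪g, v - z⟫ + 1 / α * V z v + Ψ v) Q zp)
    (hVzp : 1 / 2 * ‖zp - z‖ ^ 2 ≤ V z zp) (hu : u ∈ Q) :
    f yp + Ψ yp ≤
      τ * (f x + ⟪g, u - x⟫ + Ψ u) + τ / α * (V z u - V zp u) + (1 - τ) * (f y + Ψ y) := by
  have hxQ : x ∈ Q := hx ▸ hQ hz hy hτ0 (sub_nonneg.2 hτ1) (add_sub_cancel τ 1)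
  have hprox := prox_step_le_of_convex_comb hΨ hmin_y hdescent hzp hy hτ0 hτ1 hx
  have hmirror := hmin_z.add_bregman_le hV hΨ hzp hu hω
  have hgrad := hf.add_fderiv_sub_le hxQ hy hg.hasFDerivAt
  have hy_sub : y - x = τ • (y - z) := by rw [hx]; module
  have hu_sub : u - z = (u - x) + (1 - τ) • (y - z) := by rw [hx]; module
  rw [toDual_apply_apply, hy_sub, real_inner_smul_right] at hgrad
  rw [hu_sub, inner_add_right, real_inner_smul_right] at hmirror
  have hLτ : L * τ ^ 2 = τ / α := by
    field_simp
    linear_combination τ * hαLτ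
  have h1τ : 0 ≤ 1 - τ := sub_nonneg.2 hτ1
  have hτα : 0 ≤ τ / α := by positivity
  linear_combination hprox + τ / α * hVzp + τ * hmirror + (1 - τ) * hgrad
    + ‖zp - z‖ ^ 2 / 2 * hLτ

end LinearCoupling

theorem stmt6_general
    {H : Type*} [NormedAddCommGroup H] [InnerProductSpace ℝ H] [CompleteSpace H]
    (Q : Set H) (hQconv : Convex ℝ Q)
    (f Ψ ω : H → ℝ) (fgrad ωgrad : H → H)
    (hf : ∀ x, HasGradientAt f (fgrad x) x)
    (hω : ∀ x, HasGradientAt ω (ωgrad x) x)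
    (hfconv : ConvexOn ℝ Q f) (hΨconv : ConvexOn ℝ Q Ψ)
    (hωstrong : ∀ a ∈ Q, ∀ b ∈ Q,
      ω a + ⟪ωgrad a, b - a⟫ + (1 / 2) * ‖b - a‖ ^ 2 ≤ ω b)
    (V : H → H → ℝ)
    (hV : ∀ a b, V a b = ω b - ω a - ⟪ωgrad a, b - a⟫)
    (φ : H → ℝ) (hφ : ∀ v, φ v = f v + Ψ v)
    (α L : ℝ) (hα : 0 < α) (hL : 0 < L) (hαL : 1 ≤ α * L)
    (τ : ℝ) (hτ : τ = 1 / (α * L))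
    (y z : H) (hy : y ∈ Q) (hz : z ∈ Q)
    (xp : H) (hxp : xp = τ • z + (1 - τ) • y)
    (yp : H)
    (hypmin : ∀ v ∈ Q,
      ⟪fgrad xp, yp - xp⟫ + (L / 2) * ‖yp - xp‖ ^ 2 + Ψ yp ≤
        ⟪fgrad xp, v - xp⟫ + (L / 2) * ‖v - xp‖ ^ 2 + Ψ v)
    (zp : H) (hzpQ : zp ∈ Q)
    (hzpmin : ∀ v ∈ Q,
      ⟪fgrad xp, zp - z⟫ + (1 / α) * V z zp + Ψ zp ≤
        ⟪fgrad xp, v - z⟫ + (1 / α) * V z v + Ψ v)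
    (hdescent : f yp ≤ f xp + ⟪fgrad xp, yp - xp⟫ + (L / 2) * ‖yp - xp‖ ^ 2)
    (u : H) (hu : u ∈ Q) :
    α ^ 2 * L * φ yp - (α ^ 2 * L - α) * φ y ≤
      α * (f xp + ⟪fgrad xp, u - xp⟫ + Ψ u) + (V z u - V zp u) := by
  have hαL_pos : 0 < α * L := mul_pos hα hL
  have hτ_nonneg : 0 ≤ τ := by rw [hτ]; positivity
  have hτ_le : τ ≤ 1 := by rw [hτ, div_le_one hαL_pos]; exact hαL
  have hαLτ : α * L * τ = 1 := by rw [hτ, mul_one_div_cancel hαL_pos.ne']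
  have hVzp : 1 / 2 * ‖zp - z‖ ^ 2 ≤ V z zp := by
    linarith [hωstrong z hz zp hzpQ, hV z zp]
  have hstep := linear_coupling_step_le hQconv hfconv (hf xp) hΨconv hV (hω zp) hα hαLτ
    hτ_nonneg hτ_le hy hz hxp (isMinOn_iff.2 hypmin) hdescent hzpQ (isMinOn_iff.2 hzpmin) hVzp hu
  have hτα : α * (τ / α) = τ := mul_div_cancel₀ τ hα.ne'
  rw [hφ, hφ]
  -- scale `hstep` by `α ^ 2 * L = α / τ`
  linear_combination α ^ 2 * L * hstep
    + (α * (f xp + ⟪fgrad xp, u - xp⟫ + Ψ u) + (V z u - V zp u) - α * (f y + Ψ y)) * hαLτ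
    + α * L * (V z u - V zp u) * hτα

/-- One step of the accelerated composite gradient method (Lemma 2 of the paper):
under the per-step conditions, for every `u ∈ Q`,
`α²L·φ(y₊) − (α²L − α)·φ(y) ≤ α·( f(x₊) + ⟨∇f(x₊), u − x₊⟩ + Ψ(u) ) + (V_z(u) − V_{z₊}(u))`. -/
theorem stmt6
    {H : Type*} [NormedAddCommGroup H] [InnerProductSpace ℝ H] [CompleteSpace H]
    (Q : Set H) (hQne : Q.Nonempty) (hQclosed : IsClosed Q) (hQconv : Convex ℝ Q)
    (f Ψ ω : H → ℝ) (fgrad ωgrad : H → H)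
    (hf : ∀ x, HasGradientAt f (fgrad x) x)
    (hω : ∀ x, HasGradientAt ω (ωgrad x) x)
    (hfconv : ConvexOn ℝ Q f) (hΨconv : ConvexOn ℝ Q Ψ)
    (hωstrong : ∀ a ∈ Q, ∀ b ∈ Q,
      ω a + ⟪ωgrad a, b - a⟫ + (1 / 2) * ‖b - a‖ ^ 2 ≤ ω b)
    (V : H → H → ℝ)
    (hV : ∀ a b, V a b = ω b - ω a - ⟪ωgrad a, b - a⟫)
    (φ : H → ℝ) (hφ : ∀ v, φ v = f v + Ψ v)
    (α L : ℝ) (hα : 0 < α) (hL : 0 < L) (hαL : 1 ≤ α * L)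
    (τ : ℝ) (hτ : τ = 1 / (α * L))
    (y z : H) (hy : y ∈ Q) (hz : z ∈ Q)
    (xp : H) (hxp : xp = τ • z + (1 - τ) • y)
    (yp : H) (hypQ : yp ∈ Q)
    (hypmin : ∀ v ∈ Q,
      ⟪fgrad xp, yp - xp⟫ + (L / 2) * ‖yp - xp‖ ^ 2 + Ψ yp ≤
        ⟪fgrad xp, v - xp⟫ + (L / 2) * ‖v - xp‖ ^ 2 + Ψ v)
    (zp : H) (hzpQ : zp ∈ Q)
    (hzpmin : ∀ v ∈ Q,
      ⟪fgrad xp, zp - z⟫ + (1 / α) * V z zp + Ψ zp ≤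
        ⟪fgrad xp, v - z⟫ + (1 / α) * V z v + Ψ v)
    (hdescent : f yp ≤ f xp + ⟪fgrad xp, yp - xp⟫ + (L / 2) * ‖yp - xp‖ ^ 2)
    (u : H) (hu : u ∈ Q) :
    α ^ 2 * L * φ yp - (α ^ 2 * L - α) * φ y ≤
      α * (f xp + ⟪fgrad xp, u - xp⟫ + Ψ u) + (V z u - V zp u) :=
  stmt6_general Q hQconv f Ψ ω fgrad ωgrad hf hω hfconv hΨconv hωstrong V hV φ hφ α L hα hL hαL τ hτ
    y z hy hz xp hxp yp hypmin zp hzpQ hzpmin hdescent u hu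
end

section
/- The total number of inner-loop trials after the first k+1 outer iterations satisfies ∑_{j=0}^{k} (m_j + 1) ≤ 2(k+1) + log₂(L_{k+1}/L_0); consequently the total number N_k = 2∑_{j=0}^{k}(m_j + 1) of function evaluations satisfies N_k ≤ 4(k+1) + 2 log₂(L_{k+1}/L_0). -/
/-! Since `L (j+1) ≥ 2 ^ m j * L j / 2`, each outer iteration satisfies
`m j + 1 ≤ 2 + log₂ L (j+1) - log₂ L j`, and summing over `j` telescopes. -/

open Finset Real

theorem pos_of_backtracking {L0 : ℝ} (hL0 : 0 < L0) {m : ℕ → ℕ} {L : ℕ → ℝ}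
    (hLinit : L 0 = L0) (hLrec : ∀ j, L (j + 1) = 2 ^ (m j) * max L0 (L j / 2)) (j : ℕ) :
    0 < L j := by
  induction j with
  | zero => rwa [hLinit]
  | succ j _ => rw [hLrec j]; positivity

theorem natCast_add_one_le_two_add_logb_sub {a b : ℝ} (ha : 0 < a) {m : ℕ}
    (h : 2 ^ m * (a / 2) ≤ b) :
    (m : ℝ) + 1 ≤ 2 + (logb 2 b - logb 2 a) := by
  have hlog : logb 2 (2 ^ m * (a / 2)) = m + (logb 2 a - 1) := by
    rw [logb_mul (by positivity) (by positivity), logb_div ha.ne' two_ne_zero, logb_pow,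
      logb_self_eq_one one_lt_two, mul_one]
  have hmono := logb_le_logb_of_le one_lt_two (by positivity) h
  linarith

theorem sum_range_le_mul_add_sub_of_le_add_sub {c f : ℕ → ℝ} {d : ℝ}
    (h : ∀ j, c j ≤ d + (f (j + 1) - f j)) (n : ℕ) :
    ∑ j ∈ range n, c j ≤ n * d + (f n - f 0) := by
  calc ∑ j ∈ range n, c j ≤ ∑ j ∈ range n, (d + (f (j + 1) - f j)) := sum_le_sum fun j _ ↦ h j
    _ = n * d + (f n - f 0) := by
      rw [sum_add_distrib, sum_range_sub, sum_const, card_range, nsmul_eq_mul]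

/-- Complexity of the backtracking line search in the adaptive accelerated gradient
method: with `L 0 = L₀ > 0` and `L (j+1) = 2^(m j) * max L₀ (L j / 2)`, where `m j`
is the number of doublings at outer iteration `j` (each of the `m j + 1` trials costs
two evaluations of `f`), the total number of trials after the first `k + 1` outer
iterations satisfies `∑_{j=0}^{k} (m j + 1) ≤ 2(k+1) + log₂(L (k+1) / L₀)`;
consequently the total number `N_k = 2 ∑_{j=0}^{k} (m j + 1)` of function evaluations
satisfies `N_k ≤ 4(k+1) + 2 log₂(L (k+1) / L₀)`. -/
theorem stmt10 (L0 : ℝ) (hL0 : 0 < L0) (m : ℕ → ℕ) (L : ℕ → ℝ)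
    (hLinit : L 0 = L0)
    (hLrec : ∀ j, L (j + 1) = 2 ^ (m j) * max L0 (L j / 2)) (k : ℕ) :
    (∑ j ∈ Finset.range (k + 1), ((m j : ℝ) + 1))
        ≤ 2 * ((k : ℝ) + 1) + Real.logb 2 (L (k + 1) / L0) ∧
    2 * (∑ j ∈ Finset.range (k + 1), ((m j : ℝ) + 1))
        ≤ 4 * ((k : ℝ) + 1) + 2 * Real.logb 2 (L (k + 1) / L0) := by
  have hpos := pos_of_backtracking hL0 hLinit hLrec
  have hstep (j : ℕ) : (m j : ℝ) + 1 ≤ 2 + (logb 2 (L (j + 1)) - logb 2 (L j)) :=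
    natCast_add_one_le_two_add_logb_sub (hpos j)
      (hLrec j ▸ by gcongr; exact le_max_right _ _)
  have htrials := sum_range_le_mul_add_sub_of_le_add_sub (f := fun j ↦ logb 2 (L j)) hstep (k + 1)
  rw [logb_div (hpos (k + 1)).ne' hL0.ne', ← hLinit]
  push_cast at htrials
  constructor <;> linarith
end

section
/- Let γ > 0 and suppose each θ_p ∈ {0,1}^E has at most l_w nonzero entries for p ∈ P_w, where l_w ≥ 1. Then the convex function ψ_γ : ℝ^E → ℝ, ψ_γ(t) = ∑_{w ∈ W} d_w · γ · ln( ∑_{p ∈ P_w} exp(−⟨θ_p, t⟩/γ) ), has a Lipschitz-continuous gradient with respect to the Euclidean norm with constant L = (1/γ) ∑_{w ∈ W} d_w · l_w², i.e. ‖∇ψ_γ(t) − ∇ψ_γ(t′)‖₂ ≤ L‖t − t′‖₂ for all t, t′ ∈ ℝ^E. -/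
/-!
Write `u_p = -θ_p / γ`, so that `ψ_γ = ∑_w d_w γ · lse_w` with `lse_w t = log ∑_p exp ⟪u_p, t⟫`.
The gradient of `lse_w` is the softmax average `∑_p σ_p u_p`, whose derivative in direction `h`
pairs with `x` to the `σ`-covariance of the scores `⟪u_p, h⟫` and `⟪u_p, x⟫`; by Cauchy–Schwarz
this is at most `max_p ‖u_p‖² ‖h‖ ‖x‖ ≤ (l_w / γ)² ‖h‖ ‖x‖`, because a 0/1 vector with at most
`l_w` ones has norm `≤ √l_w ≤ l_w`. The mean value inequality turns this operator-norm bound into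
the Lipschitz bound. Convexity of log-sum-exp is Hölder's inequality, which follows from the
convexity of `exp` applied to the normalized weights.
-/

open RealInnerProductSpace Finset Real

section WeightedVariance

variable {ι : Type*} [Fintype ι] {σ : ι → ℝ}

lemma sum_mul_sub_mean_sq_le (hσ : ∑ p, σ p = 1) (A : ι → ℝ) :
    ∑ p, σ p * (A p - ∑ q, σ q * A q) ^ 2 ≤ ∑ p, σ p * A p ^ 2 := by
  set m := ∑ q, σ q * A q
  have hexpand : ∀ p, σ p * (A p - m) ^ 2 = σ p * A p ^ 2 - 2 * m * (σ p * A p) + m ^ 2 * σ p :=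
    fun p => by ring
  rw [sum_congr rfl fun p _ => hexpand p, sum_add_distrib, sum_sub_distrib, ← mul_sum, ← mul_sum,
    hσ]
  nlinarith [sq_nonneg m]

lemma sum_mul_sq_le_sq_of_abs_le (hσ0 : ∀ p, 0 ≤ σ p) (hσ : ∑ p, σ p = 1) {A : ι → ℝ} {a : ℝ}
    (hA : ∀ p, |A p| ≤ a) : ∑ p, σ p * A p ^ 2 ≤ a ^ 2 :=
  calc ∑ p, σ p * A p ^ 2 ≤ ∑ p, σ p * a ^ 2 :=
        sum_le_sum fun p _ => mul_le_mul_of_nonneg_left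
          (sq_le_sq.2 ((hA p).trans (le_abs_self a))) (hσ0 p)
    _ = a ^ 2 := by rw [← sum_mul, hσ, one_mul]

lemma abs_sum_mul_sub_mean_mul_le (hσ0 : ∀ p, 0 ≤ σ p) (hσ : ∑ p, σ p = 1) {A B : ι → ℝ}
    {a b : ℝ} (ha : 0 ≤ a) (hb : 0 ≤ b) (hA : ∀ p, |A p| ≤ a) (hB : ∀ p, |B p| ≤ b) :
    |∑ p, σ p * (A p - ∑ q, σ q * A q) * B p| ≤ a * b := by
  set m := ∑ q, σ q * A q
  have hcs : (∑ p, σ p * (A p - m) * B p) ^ 2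
      ≤ (∑ p, σ p * (A p - m) ^ 2) * ∑ p, σ p * B p ^ 2 :=
    sum_sq_le_sum_mul_sum_of_sq_le_mul _ (fun p _ => mul_nonneg (hσ0 p) (sq_nonneg _))
      (fun p _ => mul_nonneg (hσ0 p) (sq_nonneg _)) (fun p _ => le_of_eq (by ring))
  have hvarA : ∑ p, σ p * (A p - m) ^ 2 ≤ a ^ 2 :=
    (sum_mul_sub_mean_sq_le hσ A).trans (sum_mul_sq_le_sq_of_abs_le hσ0 hσ hA)
  have hvarB : ∑ p, σ p * B p ^ 2 ≤ b ^ 2 := sum_mul_sq_le_sq_of_abs_le hσ0 hσ hB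
  refine abs_le_of_sq_le_sq ?_ (mul_nonneg ha hb)
  calc _ ≤ _ := hcs
    _ ≤ a ^ 2 * b ^ 2 :=
        mul_le_mul hvarA hvarB (sum_nonneg fun p _ => mul_nonneg (hσ0 p) (sq_nonneg _))
          (sq_nonneg a)
    _ = (a * b) ^ 2 := by ring

end WeightedVariance

lemma convexOn_log_sum_exp (ι : Type*) [Fintype ι] [Nonempty ι] :
    ConvexOn ℝ Set.univ fun x : ι → ℝ => log (∑ i, exp (x i)) := by
  refine ⟨convex_univ, fun x _ y _ a b ha hb hab => ?_⟩
  have hpos : ∀ z : ι → ℝ, 0 < ∑ i, exp (z i) := fun z =>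
    sum_pos (fun _ _ => exp_pos _) univ_nonempty
  set c := a * log (∑ i, exp (x i)) + b * log (∑ i, exp (y i))
  have hterm : ∀ i, exp ((a • x + b • y) i - c)
      ≤ a * (exp (x i) / ∑ j, exp (x j)) + b * (exp (y i) / ∑ j, exp (y j)) := fun i => by
    have := convexOn_exp.2 (Set.mem_univ (x i - log (∑ j, exp (x j))))
      (Set.mem_univ (y i - log (∑ j, exp (y j)))) ha hb hab
    rw [exp_sub, exp_sub, exp_log (hpos x), exp_log (hpos y)] at this
    simp only [smul_eq_mul] at this
    refine le_of_eq_of_le (congrArg exp ?_) this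
    simp only [Pi.add_apply, Pi.smul_apply, smul_eq_mul, c]
    ring
  have hsum : ∑ i, exp ((a • x + b • y) i - c) ≤ 1 :=
    calc _ ≤ ∑ i, (a * (exp (x i) / ∑ j, exp (x j)) + b * (exp (y i) / ∑ j, exp (y j))) :=
          sum_le_sum fun i _ => hterm i
      _ = 1 := by
          rw [sum_add_distrib, ← mul_sum, ← mul_sum, ← sum_div, ← sum_div,
            div_self (hpos x).ne', div_self (hpos y).ne', mul_one, mul_one, hab]
  simp_rw [exp_sub, ← sum_div, div_le_one (exp_pos c)] at hsum
  simpa only [smul_eq_mul] using (log_le_iff_le_exp (hpos _)).2 hsum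

section Softmax

variable {F : Type*} [NormedAddCommGroup F] [InnerProductSpace ℝ F]
  {ι : Type*} [Fintype ι] (u : ι → F)

noncomputable def logSumExp (t : F) : ℝ := log (∑ p, exp ⟪u p, t⟫)

-- Rather than `exp ⟪u p, t⟫ / ∑ q, exp ⟪u q, t⟫`, so that it is differentiated by the chain rule.
noncomputable def softmax (t : F) (p : ι) : ℝ := exp (⟪u p, t⟫ - logSumExp u t)

noncomputable def softmaxMean (t : F) : F := ∑ p, softmax u t p • u p

noncomputable def softmaxCov (t : F) : F →L[ℝ] F :=
  ∑ p, (softmax u t p • (innerSL ℝ (u p) - ∑ q, softmax u t q • innerSL ℝ (u q))).smulRight (u p)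

lemma inner_softmaxCov_apply (t h x : F) :
    ⟪softmaxCov u t h, x⟫
      = ∑ p, softmax u t p * (⟪u p, h⟫ - ∑ q, softmax u t q * ⟪u q, h⟫) * ⟪u p, x⟫ := by
  simp [softmaxCov, sum_inner, real_inner_smul_left]

variable [Nonempty ι]

lemma sum_exp_inner_pos (t : F) : 0 < ∑ p, exp ⟪u p, t⟫ :=
  sum_pos (fun _ _ => exp_pos _) univ_nonempty

lemma softmax_eq_div (t : F) (p : ι) :
    softmax u t p = exp ⟪u p, t⟫ / ∑ q, exp ⟪u q, t⟫ := by
  rw [softmax, exp_sub, logSumExp, exp_log (sum_exp_inner_pos u t)]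

lemma sum_softmax (t : F) : ∑ p, softmax u t p = 1 := by
  simp only [softmax_eq_div]
  rw [← sum_div]
  exact div_self (sum_exp_inner_pos u t).ne'

lemma hasFDerivAt_logSumExp (t : F) :
    HasFDerivAt (logSumExp u) (∑ p, softmax u t p • innerSL ℝ (u p)) t := by
  have hS : HasFDerivAt (fun t => ∑ p, exp ⟪u p, t⟫) (∑ p, exp ⟪u p, t⟫ • innerSL ℝ (u p)) t :=
    HasFDerivAt.fun_sum fun p _ => (innerSL ℝ (u p)).hasFDerivAt.exp
  refine (hS.log (sum_exp_inner_pos u t).ne').congr_fderiv ?_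
  simp_rw [softmax_eq_div, smul_sum, smul_smul, div_eq_inv_mul]

lemma hasFDerivAt_softmax (t : F) (p : ι) :
    HasFDerivAt (softmax u · p)
      (softmax u t p • (innerSL ℝ (u p) - ∑ q, softmax u t q • innerSL ℝ (u q))) t :=
  ((innerSL ℝ (u p)).hasFDerivAt.sub (hasFDerivAt_logSumExp u t)).exp

lemma hasFDerivAt_softmaxMean (t : F) : HasFDerivAt (softmaxMean u) (softmaxCov u t) t :=
  HasFDerivAt.fun_sum fun p _ => (hasFDerivAt_softmax u t p).smul_const (u p)

lemma norm_softmaxCov_le (t : F) {r : ℝ} (hu : ∀ p, ‖u p‖ ≤ r) : ‖softmaxCov u t‖ ≤ r ^ 2 := by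
  have hr : 0 ≤ r := (norm_nonneg _).trans (hu (Classical.arbitrary ι))
  have hbound : ∀ x : F, ∀ p, |⟪u p, x⟫| ≤ r * ‖x‖ := fun x p =>
    (abs_real_inner_le_norm _ _).trans (mul_le_mul_of_nonneg_right (hu p) (norm_nonneg x))
  refine ContinuousLinearMap.opNorm_le_bound _ (sq_nonneg r) fun h => ?_
  set v := softmaxCov u t h
  have hv : ‖v‖ ^ 2 ≤ r ^ 2 * ‖h‖ * ‖v‖ :=
    calc ‖v‖ ^ 2 = ⟪v, v⟫ := (real_inner_self_eq_norm_sq v).symm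
      _ ≤ |⟪v, v⟫| := le_abs_self _
      _ ≤ (r * ‖h‖) * (r * ‖v‖) := by
          rw [inner_softmaxCov_apply]
          exact abs_sum_mul_sub_mean_mul_le (fun p => (exp_pos _).le) (sum_softmax u t)
            (by positivity) (by positivity) (hbound h) (hbound v)
      _ = r ^ 2 * ‖h‖ * ‖v‖ := by ring
  rcases (norm_nonneg v).eq_or_lt with hv0 | hv0
  · rw [← hv0]; positivity
  · nlinarith

lemma norm_softmaxMean_sub_le {r : ℝ} (hu : ∀ p, ‖u p‖ ≤ r) (t t' : F) :
    ‖softmaxMean u t - softmaxMean u t'‖ ≤ r ^ 2 * ‖t - t'‖ :=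
  convex_univ.norm_image_sub_le_of_norm_hasFDerivWithin_le
    (fun x _ => (hasFDerivAt_softmaxMean u x).hasFDerivWithinAt)
    (fun x _ => norm_softmaxCov_le u x hu) (Set.mem_univ t') (Set.mem_univ t)

lemma convexOn_logSumExp : ConvexOn ℝ Set.univ (logSumExp u) :=
  (convexOn_log_sum_exp ι).comp_linearMap (LinearMap.pi fun p => (innerSL ℝ (u p)).toLinearMap)

end Softmax

section SumLogSumExp

variable {F : Type*} [NormedAddCommGroup F] [InnerProductSpace ℝ F]
  {W : Type*} [Fintype W] {P : W → Type*} [∀ w, Fintype (P w)] [∀ w, Nonempty (P w)]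
  (c : W → ℝ) (u : ∀ w, P w → F)

lemma hasGradientAt_sum_mul_logSumExp [CompleteSpace F] (t : F) :
    HasGradientAt (fun t => ∑ w, c w * logSumExp (u w) t) (∑ w, c w • softmaxMean (u w) t) t := by
  rw [hasGradientAt_iff_hasFDerivAt]
  refine (HasFDerivAt.fun_sum fun w _ =>
    (hasFDerivAt_logSumExp (u w) t).const_mul (c w)).congr_fderiv ?_
  ext h
  simp [softmaxMean, mul_sum]

lemma convexOn_sum_mul_logSumExp (hc : ∀ w, 0 ≤ c w) :
    ConvexOn ℝ Set.univ fun t => ∑ w, c w * logSumExp (u w) t := by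
  have := sum_induction (s := univ) (fun w t => c w * logSumExp (u w) t) (ConvexOn ℝ Set.univ)
    (fun _ _ hf hg => hf.add hg) (convexOn_const 0 convex_univ)
    (fun w _ => (convexOn_logSumExp (u w)).smul (hc w))
  rwa [sum_fn] at this

lemma norm_sum_smul_softmaxMean_sub_le (hc : ∀ w, 0 ≤ c w) {r : W → ℝ}
    (hu : ∀ w p, ‖u w p‖ ≤ r w) (t t' : F) :
    ‖∑ w, c w • softmaxMean (u w) t - ∑ w, c w • softmaxMean (u w) t'‖
      ≤ (∑ w, c w * r w ^ 2) * ‖t - t'‖ :=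
  calc _ = ‖∑ w, c w • (softmaxMean (u w) t - softmaxMean (u w) t')‖ := by
        simp_rw [smul_sub, sum_sub_distrib]
    _ ≤ ∑ w, ‖c w • (softmaxMean (u w) t - softmaxMean (u w) t')‖ := norm_sum_le _ _
    _ ≤ ∑ w, c w * (r w ^ 2 * ‖t - t'‖) := sum_le_sum fun w _ => by
        rw [norm_smul, Real.norm_of_nonneg (hc w)]
        exact mul_le_mul_of_nonneg_left (norm_softmaxMean_sub_le (u w) (hu w) t t') (hc w)
    _ = (∑ w, c w * r w ^ 2) * ‖t - t'‖ := by simp_rw [sum_mul, mul_assoc]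

end SumLogSumExp

lemma norm_le_of_forall_eq_zero_or_one {E : Type*} [Fintype E] {x : EuclideanSpace ℝ E}
    (hx : ∀ e, x e = 0 ∨ x e = 1) {n : ℕ} (hn : (univ.filter fun e => x e ≠ 0).card ≤ n) :
    ‖x‖ ≤ n := by
  have hsq : ‖x‖ ^ 2 = (univ.filter fun e => x e ≠ 0).card := by
    rw [EuclideanSpace.real_norm_sq_eq, ← sum_boole]
    exact sum_congr rfl fun e _ => by rcases hx e with h | h <;> simp [h]
  rw [← pow_le_pow_iff_left₀ (norm_nonneg x) n.cast_nonneg two_ne_zero, hsq]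
  exact_mod_cast hn.trans (Nat.le_self_pow two_ne_zero n)

theorem stmt15_general {E W : Type*} [Fintype E] [Fintype W] (P : W → Type*)
    [∀ w, Fintype (P w)] [∀ w, Nonempty (P w)]
    (γ : ℝ) (hγ : 0 < γ) (d : W → ℝ) (hd : ∀ w, 0 < d w)
    (θ : ∀ w, P w → EuclideanSpace ℝ E)
    (hθ01 : ∀ w (p : P w) (e : E), θ w p e = 0 ∨ θ w p e = 1)
    (l : W → ℕ)
    (hcard : ∀ w (p : P w),
      (Finset.univ.filter fun e : E => θ w p e ≠ 0).card ≤ l w)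
    (ψγ : EuclideanSpace ℝ E → ℝ)
    (hψγ : ∀ t, ψγ t = ∑ w, d w * γ * Real.log (∑ p, Real.exp (-⟪θ w p, t⟫ / γ))) :
    ConvexOn ℝ Set.univ ψγ ∧
    ∀ t t' : EuclideanSpace ℝ E,
      ‖gradient ψγ t - gradient ψγ t'‖ ≤
        ((1 / γ) * ∑ w, d w * (l w : ℝ) ^ 2) * ‖t - t'‖ := by
  set u : ∀ w, P w → EuclideanSpace ℝ E := fun w p => (-γ⁻¹) • θ w p
  have hψ : ψγ = fun t => ∑ w, (d w * γ) * logSumExp (u w) t := funext fun t => by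
    simp only [hψγ, logSumExp, u, real_inner_smul_left, div_eq_inv_mul, neg_mul, mul_neg]
  have hc : ∀ w, 0 ≤ d w * γ := fun w => (mul_pos (hd w) hγ).le
  have hu : ∀ w p, ‖u w p‖ ≤ l w / γ := fun w p => by
    rw [norm_smul, norm_neg, norm_inv, Real.norm_of_nonneg hγ.le, inv_mul_eq_div]
    exact div_le_div_of_nonneg_right (norm_le_of_forall_eq_zero_or_one (hθ01 w p) (hcard w p))
      hγ.le
  refine ⟨hψ ▸ convexOn_sum_mul_logSumExp _ u hc, fun t t' => ?_⟩
  rw [hψ, (hasGradientAt_sum_mul_logSumExp _ u t).gradient,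
    (hasGradientAt_sum_mul_logSumExp _ u t').gradient]
  convert norm_sum_smul_softmaxMean_sub_le _ u hc hu t t' using 2
  rw [mul_sum]
  exact sum_congr rfl fun w _ => by field_simp

/-- Lipschitz constant of the gradient of the smoothed path potential: for `γ > 0`,
when each `θ_p ∈ {0,1}^E` has at most `l_w ≥ 1` nonzero entries for `p ∈ P_w`, the
convex function `ψ_γ(t) = ∑_{w ∈ W} d_w · γ · ln(∑_{p ∈ P_w} exp(−⟨θ_p, t⟩/γ))` has
a Lipschitz-continuous gradient with respect to the Euclidean norm with constant
`L = (1/γ) ∑_{w ∈ W} d_w · l_w²`. -/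
theorem stmt15 {E W : Type*} [Fintype E] [Fintype W] (P : W → Type*)
    [∀ w, Fintype (P w)] [∀ w, Nonempty (P w)]
    (γ : ℝ) (hγ : 0 < γ) (d : W → ℝ) (hd : ∀ w, 0 < d w)
    (θ : ∀ w, P w → EuclideanSpace ℝ E)
    (hθ01 : ∀ w (p : P w) (e : E), θ w p e = 0 ∨ θ w p e = 1)
    (l : W → ℕ) (hl : ∀ w, 1 ≤ l w)
    (hcard : ∀ w (p : P w),
      (Finset.univ.filter fun e : E => θ w p e ≠ 0).card ≤ l w)
    (ψγ : EuclideanSpace ℝ E → ℝ)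
    (hψγ : ∀ t, ψγ t = ∑ w, d w * γ * Real.log (∑ p, Real.exp (-⟪θ w p, t⟫ / γ))) :
    ConvexOn ℝ Set.univ ψγ ∧
    ∀ t t' : EuclideanSpace ℝ E,
      ‖gradient ψγ t - gradient ψγ t'‖ ≤
        ((1 / γ) * ∑ w, d w * (l w : ℝ) ^ 2) * ‖t - t'‖ :=
  stmt15_general P γ hγ d hd θ hθ01 l hcard ψγ hψγ
end

section
/- The minimum over x ∈ X of ∑_{e ∈ E} σ_e((Θx)_e) + γ ∑_{w ∈ W} ∑_{p ∈ P_w} x_p ln(x_p/d_w) (with the convention 0·ln 0 = 0) equals the negative of the infimum over t ∈ ℝ^E of γ ∑_{w ∈ W} d_w ln( ∑_{p ∈ P_w} exp(−⟨θ_p, t⟩/γ) ) + ∑_{e ∈ E} σ_e*(t_e), where σ_e*(s) = sup_{f ∈ ℝ} ( f·s − σ_e(f) ) and the infimum is taken over those t with σ_e*(t_e) < ∞ for all e ∈ E. -/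
/-!
Perturb the edge loads: `φ u = min_{x ∈ X} ∑_e σ_e((Θx)_e + u_e) + γ H(x)`, where `H` is the
entropy term, is a convex function of `u ∈ ℝ^E`, being the partial minimisation over the compact
convex set `X` of a jointly convex function; being finite, it is continuous. Weak duality is
Fenchel–Young for each `σ_e` combined with the Gibbs variational principle
`min_{x ∈ X} γ H(x) + ⟨c, x⟩ = -γ ∑_w d_w ln ∑_{p ∈ P_w} exp(-c_p/γ)`, attained at the Gibbs
distribution. Conversely, Hahn–Banach gives for every `a < φ 0` an affine minorant
`a + ⟨t, u⟩ ≤ φ u`; testing it at `u = v - Θx̂`, with `x̂` the Gibbs point of the path costs `Θᵀt`,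
bounds `∑_e (v_e t_e - σ_e(v_e))` uniformly in `v`, so that `t` is dual feasible with `D t ≤ -a`.
-/

open Real Finset Set

theorem sub_le_mul_log_div {x q : ℝ} (hx : 0 ≤ x) (hq : 0 < q) : x - q ≤ x * log (x / q) := by
  rcases hx.eq_or_lt with rfl | hx
  · simpa using hq.le
  have h := one_sub_inv_le_log_of_pos (div_pos hx hq)
  rw [inv_div] at h
  have := mul_le_mul_of_nonneg_left h hx.le
  rwa [mul_sub, mul_one, mul_div_cancel₀ _ hx.ne'] at this

theorem sum_mul_log_div_nonneg {ι : Type*} (s : Finset ι) {x q : ι → ℝ}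
    (hx : ∀ i ∈ s, 0 ≤ x i) (hq : ∀ i ∈ s, 0 < q i) (hsum : ∑ i ∈ s, x i = ∑ i ∈ s, q i) :
    0 ≤ ∑ i ∈ s, x i * log (x i / q i) := by
  calc (0 : ℝ) = ∑ i ∈ s, (x i - q i) := by rw [sum_sub_distrib, hsum, sub_self]
    _ ≤ _ := sum_le_sum fun i hi => sub_le_mul_log_div (hx i hi) (hq i hi)

theorem mul_log_div_eq {a : ℝ} (ha : a ≠ 0) (y : ℝ) : y * log (y / a) = y * log y - y * log a := by
  rcases eq_or_ne y 0 with rfl | hy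
  · simp
  rw [log_div hy ha, mul_sub]

theorem continuous_mul_log_div (a : ℝ) : Continuous fun y => y * log (y / a) := by
  rcases eq_or_ne a 0 with rfl | ha
  · simpa using continuous_const
  simp only [mul_log_div_eq ha]
  exact continuous_mul_log.sub (continuous_id.mul continuous_const)

theorem convexOn_mul_log_div {a : ℝ} (ha : a ≠ 0) :
    ConvexOn ℝ (Ici 0) fun y => y * log (y / a) := by
  simp only [mul_log_div_eq ha, sub_eq_add_neg, ← mul_neg]
  exact convexOn_mul_log.add ((LinearMap.mulRight ℝ (-log a)).convexOn (convex_Ici 0))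

theorem ConvexOn.convexOn_of_isLeast {𝕜 E F β : Type*} [Semiring 𝕜] [PartialOrder 𝕜]
    [AddCommMonoid E] [AddCommMonoid F] [AddCommMonoid β] [PartialOrder β] [SMul 𝕜 E] [SMul 𝕜 F]
    [SMul 𝕜 β] {K : Set E} {G : E × F → β} (hG : ConvexOn 𝕜 (K ×ˢ univ) G) {φ : F → β}
    (hφ : ∀ u, IsLeast ((fun x => G (x, u)) '' K) (φ u)) : ConvexOn 𝕜 univ φ := by
  refine ⟨convex_univ, fun u _ v _ a b ha hb hab => ?_⟩
  obtain ⟨⟨x, hx, hxu⟩, -⟩ := hφ u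
  obtain ⟨⟨y, hy, hyv⟩, -⟩ := hφ v
  have hxu' : (x, u) ∈ K ×ˢ univ := mk_mem_prod hx (mem_univ u)
  have hyv' : (y, v) ∈ K ×ˢ univ := mk_mem_prod hy (mem_univ v)
  calc φ (a • u + b • v) ≤ G (a • x + b • y, a • u + b • v) :=
        (hφ _).2 ⟨_, (mem_prod.1 (hG.1 hxu' hyv' ha hb hab)).1, rfl⟩
    _ ≤ a • G (x, u) + b • G (y, v) := hG.2 hxu' hyv' ha hb hab
    _ = a • φ u + b • φ v := by rw [← hxu, ← hyv]

theorem convexOn_finset_sum {𝕜 E β ι : Type*} [Semiring 𝕜] [PartialOrder 𝕜] [AddCommMonoid E]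
    [SMul 𝕜 E] [AddCommMonoid β] [PartialOrder β] [IsOrderedAddMonoid β] [Module 𝕜 β]
    (t : Finset ι) {s : Set E} {f : ι → E → β} (hs : Convex 𝕜 s)
    (hf : ∀ i ∈ t, ConvexOn 𝕜 s (f i)) :
    ConvexOn 𝕜 s fun x => ∑ i ∈ t, f i x := by
  induction t using Finset.cons_induction with
  | empty => simpa using convexOn_const (0 : β) hs
  | cons i t hi ih =>
    simp only [sum_cons]
    exact (hf i (mem_cons_self i t)).add (ih fun j hj => hf j (mem_cons_of_mem hj))

theorem ConvexOn.exists_affine_minorant {ι : Type*} [Fintype ι] {φ : (ι → ℝ) → ℝ}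
    (hφ : ConvexOn ℝ univ φ) {x : ι → ℝ} {a : ℝ} (ha : a < φ x) :
    ∃ t : ι → ℝ, ∀ u, a + ∑ i, t i * (u i - x i) ≤ φ u := by
  classical
  have hlsc : LowerSemicontinuousOn φ univ :=
    (hφ.continuousOn isOpen_univ).lowerSemicontinuousOn
  obtain ⟨l, c, hle, rfl⟩ := hφ.exists_affine_le_of_lt (𝕜 := ℝ) (mem_univ x) ha isClosed_univ hlsc
  refine ⟨fun i => l fun j => if i = j then 1 else 0, fun u => ?_⟩
  have hlin : l (u - x) = ∑ i, (u i - x i) * l fun j => if i = j then 1 else 0 := by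
    simpa using l.toLinearMap.pi_apply_eq_sum_univ (u - x)
  have hu := hle ⟨u, mem_univ u⟩
  simp only [Pi.add_apply, domRestrict_apply, Function.comp_apply, RCLike.re_to_real,
    Function.const_apply] at hu
  simp only [RCLike.re_to_real, map_sub] at hlin ⊢
  simp_rw [mul_comm _ (u _ - x _)]
  linarith

theorem bddAbove_and_sum_iSup_le {ι α : Type*} [Nonempty α] (s : Finset ι) (g : ι → α → ℝ)
    {C : ℝ} (h : ∀ f : ι → α, ∑ i ∈ s, g i (f i) ≤ C) :
    (∀ i ∈ s, BddAbove (range (g i))) ∧ ∑ i ∈ s, ⨆ y, g i y ≤ C := by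
  classical
  induction s using Finset.induction_on generalizing C with
  | empty => simpa using h fun _ => Classical.arbitrary α
  | insert a s ha ih =>
    have hrest : ∀ y, (∀ i ∈ s, BddAbove (range (g i))) ∧ ∑ i ∈ s, ⨆ y, g i y ≤ C - g a y :=
      fun y => ih fun f => by
        have hf := h (Function.update f a y)
        have hsame : ∑ i ∈ s, g i (Function.update f a y i) = ∑ i ∈ s, g i (f i) :=
          sum_congr rfl fun i hi => by rw [Function.update_of_ne (ne_of_mem_of_not_mem hi ha)]
        rw [sum_insert ha, Function.update_self, hsame] at hf
        linarith
    have hbound : ∀ y, g a y ≤ C - ∑ i ∈ s, ⨆ y, g i y := fun y => by linarith [(hrest y).2]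
    obtain ⟨hbdd, -⟩ := hrest (Classical.arbitrary α)
    refine ⟨Finset.forall_mem_insert .. |>.2 ⟨⟨_, forall_mem_range.2 hbound⟩, hbdd⟩, ?_⟩
    rw [sum_insert ha]
    linarith [ciSup_le hbound]

namespace Traffic

noncomputable section

variable {E W : Type*} {P : W → Type*} [∀ w, Fintype (P w)]

def demandSet (d : W → ℝ) : Set (∀ w, P w → ℝ) :=
  {x | (∀ w p, 0 ≤ x w p) ∧ ∀ w, ∑ p, x w p = d w}

def gibbs (γ : ℝ) (d : W → ℝ) (c : ∀ w, P w → ℝ) (w : W) (p : P w) : ℝ :=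
  d w * exp (-c w p / γ) / ∑ q, exp (-c w q / γ)

theorem convex_demandSet (d : W → ℝ) : Convex ℝ (demandSet (P := P) d) := by
  rintro x ⟨hx₀, hx⟩ y ⟨hy₀, hy⟩ a b ha hb hab
  refine ⟨fun w p => ?_, fun w => ?_⟩
  · simp only [Pi.add_apply, Pi.smul_apply, smul_eq_mul]
    exact add_nonneg (mul_nonneg ha (hx₀ w p)) (mul_nonneg hb (hy₀ w p))
  · simp only [Pi.add_apply, Pi.smul_apply, smul_eq_mul, sum_add_distrib, ← mul_sum, hx, hy,
      ← add_mul, hab, one_mul]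

theorem isCompact_demandSet (d : W → ℝ) : IsCompact (demandSet (P := P) d) := by
  have hclosed : IsClosed (demandSet (P := P) d) := by
    simp only [demandSet, ofPred_and, ofPred_forall]
    exact (isClosed_iInter fun w => isClosed_iInter fun p => isClosed_le continuous_const
      (by fun_prop)).inter (isClosed_iInter fun w => isClosed_eq (by fun_prop) continuous_const)
  refine (isCompact_univ_pi fun w => isCompact_univ_pi fun (_ : P w) =>
    isCompact_Icc (a := 0) (b := d w)).of_isClosed_subset hclosed
    fun x ⟨hx₀, hx⟩ w _ p _ => ⟨hx₀ w p, ?_⟩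
  exact hx w ▸ single_le_sum (fun q _ => hx₀ w q) (mem_univ p)

section

variable [∀ w, Nonempty (P w)] {γ : ℝ} {d : W → ℝ} (c : ∀ w, P w → ℝ)

theorem demandSet_nonempty (hd : ∀ w, 0 ≤ d w) : (demandSet (P := P) d).Nonempty :=
  ⟨fun w _ => d w / Fintype.card (P w), fun w p => by have := hd w; positivity, fun w => by
    rw [sum_const, card_univ, nsmul_eq_mul,
      mul_div_cancel₀ _ (Nat.cast_ne_zero.2 Fintype.card_ne_zero)]⟩

theorem gibbs_pos (hd : ∀ w, 0 < d w) (w : W) (p : P w) : 0 < gibbs γ d c w p := by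
  have := hd w
  unfold gibbs
  positivity

theorem sum_gibbs (w : W) : ∑ p, gibbs γ d c w p = d w := by
  have hZ : 0 < ∑ q, exp (-c w q / γ) := sum_pos (fun q _ => exp_pos _) univ_nonempty
  simp only [gibbs, ← sum_div, ← mul_sum, mul_div_assoc, div_self hZ.ne', mul_one]

theorem gibbs_mem_demandSet (hd : ∀ w, 0 < d w) : gibbs γ d c ∈ demandSet d :=
  ⟨fun w p => (gibbs_pos c hd w p).le, sum_gibbs c⟩

end

variable [Fintype E] [Fintype W]

def edgeFlow (θ : ∀ w, P w → E → ℝ) : (∀ w, P w → ℝ) →ₗ[ℝ] E → ℝ where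
  toFun x e := ∑ w, ∑ p, θ w p e * x w p
  map_add' x y := by ext e; simp [mul_add, sum_add_distrib]
  map_smul' c x := by ext e; simp [mul_sum, mul_left_comm]

def pathCost (θ : ∀ w, P w → E → ℝ) (t : E → ℝ) (w : W) (p : P w) : ℝ := ∑ e, θ w p e * t e

def entropy (d : W → ℝ) (x : ∀ w, P w → ℝ) : ℝ := ∑ w, ∑ p, x w p * log (x w p / d w)

def freeEnergy (γ : ℝ) (d : W → ℝ) (c : ∀ w, P w → ℝ) : ℝ :=
  -(γ * ∑ w, d w * log (∑ p, exp (-c w p / γ)))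

theorem sum_mul_edgeFlow (θ : ∀ w, P w → E → ℝ) (t : E → ℝ) (x : ∀ w, P w → ℝ) :
    ∑ e, t e * edgeFlow θ x e = ∑ w, ∑ p, pathCost θ t w p * x w p := by
  simp only [edgeFlow, pathCost, LinearMap.coe_mk, AddHom.coe_mk, mul_sum, sum_mul]
  rw [sum_comm]
  refine sum_congr rfl fun w _ => ?_
  rw [sum_comm]
  exact sum_congr rfl fun p _ => sum_congr rfl fun e _ => by ring

theorem convexOn_entropy {d : W → ℝ} (hd : ∀ w, d w ≠ 0) :
    ConvexOn ℝ (demandSet d) (entropy (P := P) d) :=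
  convexOn_finset_sum _ (convex_demandSet d) fun w _ =>
    convexOn_finset_sum _ (convex_demandSet d) fun p _ =>
      ((convexOn_mul_log_div (hd w)).comp_linearMap
        (LinearMap.proj (R := ℝ) (φ := fun _ : P w => ℝ) p ∘ₗ
          LinearMap.proj (R := ℝ) (φ := fun w => P w → ℝ) w)).subset
        (fun x (hx : x ∈ demandSet d) => hx.1 w p) (convex_demandSet d)

section Gibbs

variable [∀ w, Nonempty (P w)] {γ : ℝ} {d : W → ℝ} (c : ∀ w, P w → ℝ)

theorem entropy_add_cost_eq (hγ : γ ≠ 0) (hd : ∀ w, 0 < d w) {x : ∀ w, P w → ℝ}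
    (hx : ∀ w, ∑ p, x w p = d w) :
    γ * entropy d x + ∑ w, ∑ p, c w p * x w p =
      freeEnergy γ d c + γ * ∑ w, ∑ p, x w p * log (x w p / gibbs γ d c w p) := by
  have hZ (w : W) : 0 < ∑ q, exp (-c w q / γ) := sum_pos (fun q _ => exp_pos _) univ_nonempty
  have hterm : ∀ w p, x w p * log (x w p / d w) = x w p * log (x w p / gibbs γ d c w p)
      - x w p * (c w p / γ + log (∑ q, exp (-c w q / γ))) := fun w p => by
    rcases eq_or_ne (x w p) 0 with h0 | h0
    · simp [h0]
    rw [log_div h0 (hd w).ne', log_div h0 (gibbs_pos c hd w p).ne', gibbs,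
      log_div (mul_pos (hd w) (exp_pos _)).ne' (hZ w).ne', log_mul (hd w).ne' (exp_pos _).ne',
      log_exp]
    ring
  have hw : ∀ w, γ * ∑ p, x w p * log (x w p / d w) + ∑ p, c w p * x w p =
      -(γ * (d w * log (∑ q, exp (-c w q / γ)))) +
        γ * ∑ p, x w p * log (x w p / gibbs γ d c w p) := fun w => by
    have hmean : ∑ p, x w p * (c w p / γ + log (∑ q, exp (-c w q / γ))) =
        (∑ p, c w p * x w p) / γ + d w * log (∑ q, exp (-c w q / γ)) := by
      rw [← hx w, sum_mul, sum_div, ← sum_add_distrib]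
      exact sum_congr rfl fun p _ => by ring
    rw [sum_congr rfl fun p _ => hterm w p, sum_sub_distrib, hmean]
    field_simp
    ring
  calc γ * entropy d x + ∑ w, ∑ p, c w p * x w p
      = ∑ w, (γ * ∑ p, x w p * log (x w p / d w) + ∑ p, c w p * x w p) := by
        rw [entropy, mul_sum, sum_add_distrib]
    _ = _ := by
        rw [sum_congr rfl fun w _ => hw w]
        simp only [freeEnergy, sum_add_distrib, sum_neg_distrib, mul_sum]

theorem isLeast_entropy_add_cost (hγ : 0 < γ) (hd : ∀ w, 0 < d w) :
    IsLeast ((fun x => γ * entropy d x + ∑ w, ∑ p, c w p * x w p) '' demandSet d)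
      (freeEnergy γ d c) := by
  refine ⟨⟨gibbs γ d c, gibbs_mem_demandSet c hd, ?_⟩, ?_⟩
  · simp [entropy_add_cost_eq c hγ.ne' hd (sum_gibbs c), div_self (gibbs_pos c hd _ _).ne']
  · rintro _ ⟨x, ⟨hx₀, hx⟩, rfl⟩
    dsimp only
    rw [entropy_add_cost_eq c hγ.ne' hd hx, le_add_iff_nonneg_right]
    exact mul_nonneg hγ.le (sum_nonneg fun w _ => sum_mul_log_div_nonneg _
      (fun p _ => hx₀ w p) (fun p _ => gibbs_pos c hd w p) (by rw [hx, sum_gibbs]))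

end Gibbs

variable (σ : E → ℝ → ℝ) (θ : ∀ w, P w → E → ℝ) (γ : ℝ) (d : W → ℝ)

def perturbedCost (x : ∀ w, P w → ℝ) (u : E → ℝ) : ℝ :=
  ∑ e, σ e (edgeFlow θ x e + u e) + γ * entropy d x

def valueFunction (u : E → ℝ) : ℝ :=
  sInf ((perturbedCost σ θ γ d · u) '' demandSet d)

/-- Equal to `0` where the supremum is infinite, so finiteness has to be assumed separately. -/
def conjugate (f : ℝ → ℝ) (s : ℝ) : ℝ := ⨆ y, y * s - f y

def dualCost (t : E → ℝ) : ℝ := -freeEnergy γ d (pathCost θ t) + ∑ e, conjugate (σ e) (t e)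

theorem convexOn_perturbedCost (hσ : ∀ e, ConvexOn ℝ Set.univ (σ e)) (hγ : 0 ≤ γ)
    (hd : ∀ w, d w ≠ 0) :
    ConvexOn ℝ (demandSet d ×ˢ Set.univ) fun z => perturbedCost σ θ γ d z.1 z.2 := by
  have hs := (convex_demandSet (P := P) d).prod (convex_univ (𝕜 := ℝ) (E := E → ℝ))
  refine ConvexOn.add ?_ ?_
  · exact convexOn_finset_sum _ hs fun e _ => ((hσ e).comp_linearMap
      (LinearMap.proj (R := ℝ) (φ := fun _ : E => ℝ) e ∘ₗ (edgeFlow θ).coprod LinearMap.id)).subset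
        (subset_univ _) hs
  · rw [prod_univ]
    exact ((convexOn_entropy (P := P) hd).smul hγ).comp_linearMap
      (LinearMap.fst ℝ (∀ w, P w → ℝ) (E → ℝ))

theorem continuous_perturbedCost (hσ : ∀ e, Continuous (σ e)) (u : E → ℝ) :
    Continuous fun x => perturbedCost σ θ γ d x u := by
  have hflow : Continuous (edgeFlow (P := P) θ) := LinearMap.continuous_of_finiteDimensional _
  refine (continuous_finsetSum _ fun e _ => (hσ e).comp ?_).add
    (continuous_const.mul (continuous_finsetSum _ fun w _ => continuous_finsetSum _ fun p _ =>
      (continuous_mul_log_div (d w)).comp ((continuous_apply p).comp (continuous_apply w))))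
  exact ((continuous_apply e).comp hflow).add continuous_const

variable [∀ w, Nonempty (P w)]

theorem neg_dualCost_le_perturbedCost (hγ : 0 < γ) (hd : ∀ w, 0 < d w)
    {x : ∀ w, P w → ℝ} (hx : x ∈ demandSet d) {t : E → ℝ}
    (ht : ∀ e, BddAbove (range fun y => y * t e - σ e y)) :
    -dualCost σ θ γ d t ≤ perturbedCost σ θ γ d x 0 := by
  have hgibbs := (isLeast_entropy_add_cost (pathCost θ t) hγ hd).2 ⟨x, hx, rfl⟩
  have hfenchel : ∑ e, (edgeFlow θ x e * t e - σ e (edgeFlow θ x e)) ≤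
      ∑ e, conjugate (σ e) (t e) :=
    sum_le_sum fun e _ => le_ciSup (ht e) _
  dsimp only at hgibbs
  rw [← sum_mul_edgeFlow] at hgibbs
  simp only [sum_sub_distrib, mul_comm (edgeFlow θ x _)] at hfenchel
  simp only [dualCost, perturbedCost, Pi.zero_apply, add_zero]
  linarith

theorem bddAbove_and_dualCost_le (hγ : 0 < γ) (hd : ∀ w, 0 < d w) {t : E → ℝ} {m : ℝ}
    (hm : ∀ x ∈ demandSet d, ∀ u, m + ∑ e, t e * u e ≤ perturbedCost σ θ γ d x u) :
    (∀ e, BddAbove (range fun y => y * t e - σ e y)) ∧ dualCost σ θ γ d t ≤ -m := by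
  obtain ⟨x, hx, hxval⟩ := (isLeast_entropy_add_cost (pathCost θ t) hγ hd).1
  have hbound (v : E → ℝ) : ∑ e, (v e * t e - σ e (v e)) ≤ freeEnergy γ d (pathCost θ t) - m := by
    have h := hm x hx (v - edgeFlow θ x)
    simp only [perturbedCost, Pi.sub_apply, add_sub_cancel, mul_sub, sum_sub_distrib,
      sum_mul_edgeFlow] at h
    simp only [sum_sub_distrib, mul_comm (v _)]
    linarith
  obtain ⟨hbdd, hsum⟩ := bddAbove_and_sum_iSup_le univ (fun e y => y * t e - σ e y) hbound
  exact ⟨fun e => hbdd e (mem_univ e), by simp only [dualCost, conjugate]; linarith⟩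

theorem isLeast_valueFunction (hσ : ∀ e, Continuous (σ e)) (hd : ∀ w, 0 ≤ d w) (u : E → ℝ) :
    IsLeast ((perturbedCost σ θ γ d · u) '' demandSet d) (valueFunction σ θ γ d u) :=
  ((isCompact_demandSet d).image (continuous_perturbedCost σ θ γ d hσ u)).isLeast_sInf
    ((demandSet_nonempty hd).image _)

theorem exists_dualCost_le (hσconv : ∀ e, ConvexOn ℝ Set.univ (σ e))
    (hσcont : ∀ e, Continuous (σ e)) (hγ : 0 < γ) (hd : ∀ w, 0 < d w) {a : ℝ}
    (ha : a < valueFunction σ θ γ d 0) :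
    ∃ t, (∀ e, BddAbove (range fun y => y * t e - σ e y)) ∧ dualCost σ θ γ d t ≤ -a := by
  have hleast := isLeast_valueFunction σ θ γ d hσcont fun w => (hd w).le
  have hconv := ConvexOn.convexOn_of_isLeast
    (convexOn_perturbedCost σ θ γ d hσconv hγ.le fun w => (hd w).ne') hleast
  obtain ⟨t, ht⟩ := hconv.exists_affine_minorant ha
  refine ⟨t, bddAbove_and_dualCost_le σ θ γ d hγ hd fun x hx u => ?_⟩
  simpa using (ht u).trans ((hleast u).2 ⟨x, hx, rfl⟩)

end

end Traffic

/-- Variational principle (single-level case): the minimum over `x ∈ X` of the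
entropy-regularized primal
`∑_e σ_e((Θx)_e) + γ ∑_w ∑_{p ∈ P_w} x_p ln(x_p/d_w)`
(the convention `0·ln 0 = 0` holds automatically since `Real.log 0 = 0`) equals the
negative of the infimum over `t ∈ ℝ^E` with `σ_e*(t_e) < ∞` for all `e` (i.e. the
suprema defining the conjugates are bounded above) of the dual
`γ ∑_w d_w ln(∑_{p ∈ P_w} exp(−⟨θ_p, t⟩/γ)) + ∑_e σ_e*(t_e)`,
where `σ_e*(s) = sup_f (f·s − σ_e(f))`. -/
theorem stmt18 {E W : Type*} [Fintype E] [Fintype W] (P : W → Type*)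
    [∀ w, Fintype (P w)] [∀ w, Nonempty (P w)]
    (γ : ℝ) (hγ : 0 < γ) (d : W → ℝ) (hd : ∀ w, 0 < d w)
    (θ : ∀ w, P w → E → ℝ)
    (σ : E → ℝ → ℝ)
    (hσconv : ∀ e, ConvexOn ℝ Set.univ (σ e)) (hσcont : ∀ e, Continuous (σ e))
    (X : Set (∀ w, P w → ℝ))
    (hX : X = {x | (∀ w p, 0 ≤ x w p) ∧ ∀ w, ∑ p, x w p = d w})
    (Φ : (∀ w, P w → ℝ) → ℝ)
    (hΦ : ∀ x, Φ x = (∑ e, σ e (∑ w, ∑ p, θ w p e * x w p))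
      + γ * ∑ w, ∑ p, x w p * Real.log (x w p / d w))
    (σstar : E → ℝ → ℝ)
    (hσstar : ∀ e s, σstar e s = sSup (Set.range fun f : ℝ => f * s - σ e f))
    (D : (E → ℝ) → ℝ)
    (hD : ∀ t, D t = γ * (∑ w, d w * Real.log
        (∑ p, Real.exp (-(∑ e, θ w p e * t e) / γ)))
      + ∑ e, σstar e (t e)) :
    sInf (Φ '' X) =
      - sInf {v | ∃ t : E → ℝ,
          (∀ e, BddAbove (Set.range fun f : ℝ => f * t e - σ e f)) ∧ v = D t} := by
  obtain rfl : X = Traffic.demandSet d := hX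
  obtain rfl : Φ = (Traffic.perturbedCost σ θ γ d · 0) :=
    funext fun x => by simp [hΦ, Traffic.perturbedCost, Traffic.edgeFlow, Traffic.entropy]
  obtain rfl : D = Traffic.dualCost σ θ γ d :=
    funext fun t => by simp only [hD, hσstar, Traffic.dualCost, Traffic.freeEnergy, neg_neg]; rfl
  have hmin := Traffic.isLeast_valueFunction σ θ γ d hσcont (fun w => (hd w).le) 0
  obtain ⟨t₀, ht₀, -⟩ := Traffic.exists_dualCost_le σ θ γ d hσconv hσcont hγ hd (sub_one_lt _)
  rw [hmin.csInf_eq, eq_comm, neg_eq_iff_eq_neg]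
  refine csInf_eq_of_forall_ge_of_forall_gt_exists_lt ⟨_, t₀, ht₀, rfl⟩ ?_ ?_
  · rintro _ ⟨t, ht, rfl⟩
    obtain ⟨x, hx, hxval⟩ := hmin.1
    linarith [Traffic.neg_dualCost_le_perturbedCost σ θ γ d hγ hd hx ht]
  · intro b hb
    obtain ⟨a, hba, ha⟩ := exists_between (neg_lt.1 hb)
    obtain ⟨t, ht, hle⟩ := Traffic.exists_dualCost_le σ θ γ d hσconv hσcont hγ hd ha
    exact ⟨_, ⟨t, ht, rfl⟩, by linarith⟩
end
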